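/- arXiv:1901.10864 — 2 statements merged into one kernel-verified Lean document; each statement's English description precedes it below -/
import Mathlib

section
/- (Exponential mechanism.) Let (Y, F, ν) be a measure space, let ε > 0, and let {ξ_X : Y → ℝ | X ∈ X^n} be a collection of measurable functions with finite sensitivity Δ_ξ > 0, i.e., |ξ_X(b) − ξ_{X'}(b)| ≤ Δ_ξ for all adjacent X, X' and ν-almost every b ∈ Y. Assume that for every X ∈ X^n the normalizing constant c_X = ∫_Y exp((ε/(2Δ_ξ)) ξ_X(b)) dν(b) is finite and strictly positive. Then the family of probability measures {μ_X : X ∈ X^n} defined by μ_X(B) = c_X^{-1} ∫_B exp((ε/(2Δ_ξ)) ξ_X(b)) dν(b) satisfies ε-differential privacy. -/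
/-!
Shifting the score by at most `Δ` changes the unnormalized density `exp((ε/(2Δ)) ξ_X)` by a
factor of at most `exp(ε/2)` in either direction. Integrating over `B` bounds the numerator of
`μ_X(B)` by `exp(ε/2)` times that of `μ_{X'}(B)`; integrating over all of `Y`, with the roles of
`X` and `X'` swapped, bounds `c_X⁻¹` by `exp(ε/2) c_{X'}⁻¹`. The two factors multiply to `exp ε`.
-/

open MeasureTheory
open scoped ENNReal

lemma ENNReal.inv_le_mul_inv_of_le_mul {a C C' : ℝ≥0∞} (ha₀ : a ≠ 0) (ha : a ≠ ∞)
    (h : C' ≤ a * C) : C⁻¹ ≤ a * C'⁻¹ := by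
  rw [← div_eq_mul_inv, ENNReal.le_div_iff_mul_le (Or.inr ha₀) (Or.inr ha)]
  calc C⁻¹ * C' ≤ C⁻¹ * (a * C) := by gcongr
    _ = a * (C⁻¹ * C) := by ring
    _ ≤ a * 1 := by gcongr; exact ENNReal.inv_mul_le_one C
    _ = a := mul_one a

lemma lintegral_le_const_mul_of_ae_le {Y : Type*} [MeasurableSpace Y] {ν : Measure Y}
    {f g : Y → ℝ≥0∞} {a : ℝ≥0∞} (ha : a ≠ ∞) (h : ∀ᵐ b ∂ν, f b ≤ a * g b) :
    ∫⁻ b, f b ∂ν ≤ a * ∫⁻ b, g b ∂ν :=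
  (lintegral_mono_ae h).trans_eq (lintegral_const_mul' a g ha)

lemma inv_lintegral_mul_setLIntegral_le {Y : Type*} [MeasurableSpace Y] {ν : Measure Y}
    {f g : Y → ℝ≥0∞} {a : ℝ≥0∞} (ha₀ : a ≠ 0) (ha : a ≠ ∞)
    (hfg : ∀ᵐ b ∂ν, f b ≤ a * g b) (hgf : ∀ᵐ b ∂ν, g b ≤ a * f b) (B : Set Y) :
    (∫⁻ b, f b ∂ν)⁻¹ * ∫⁻ b in B, f b ∂ν ≤
      a * a * ((∫⁻ b, g b ∂ν)⁻¹ * ∫⁻ b in B, g b ∂ν) := by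
  have hnorm := ENNReal.inv_le_mul_inv_of_le_mul ha₀ ha (lintegral_le_const_mul_of_ae_le ha hgf)
  have hset := lintegral_le_const_mul_of_ae_le ha (ae_restrict_of_ae (s := B) hfg)
  calc (∫⁻ b, f b ∂ν)⁻¹ * ∫⁻ b in B, f b ∂ν
      ≤ (a * (∫⁻ b, g b ∂ν)⁻¹) * (a * ∫⁻ b in B, g b ∂ν) := mul_le_mul' hnorm hset
    _ = a * a * ((∫⁻ b, g b ∂ν)⁻¹ * ∫⁻ b in B, g b ∂ν) := by ring

lemma ofReal_exp_mul_le_of_abs_sub_le {k Δ x y : ℝ} (hk : 0 ≤ k) (h : |x - y| ≤ Δ) :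
    ENNReal.ofReal (Real.exp (k * x)) ≤
      ENNReal.ofReal (Real.exp (k * Δ)) * ENNReal.ofReal (Real.exp (k * y)) := by
  rw [← ENNReal.ofReal_mul (Real.exp_pos _).le, ← Real.exp_add]
  gcongr
  nlinarith [(abs_le.1 h).2]

theorem stmt_4_general {Y 𝒳 : Type*} [MeasurableSpace Y] {n : ℕ} [DecidableEq 𝒳]
    (ν : Measure Y) (ε Δ : ℝ) (hε : 0 < ε) (hΔ : 0 < Δ)
    (ξ : (Fin n → 𝒳) → Y → ℝ)
    (hsens : ∀ X X' : Fin n → 𝒳, hammingDist X X' = 1 →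
      ∀ᵐ b ∂ν, |ξ X b - ξ X' b| ≤ Δ)
    (c : (Fin n → 𝒳) → ℝ≥0∞)
    (hc : ∀ X, c X = ∫⁻ b, ENNReal.ofReal (Real.exp (ε / (2 * Δ) * ξ X b)) ∂ν) :
    ∀ X X' : Fin n → 𝒳, hammingDist X X' = 1 →
      ∀ B : Set Y, MeasurableSet B →
        (c X)⁻¹ * ∫⁻ b in B, ENNReal.ofReal (Real.exp (ε / (2 * Δ) * ξ X b)) ∂ν ≤
          ENNReal.ofReal (Real.exp ε) *
            ((c X')⁻¹ * ∫⁻ b in B, ENNReal.ofReal (Real.exp (ε / (2 * Δ) * ξ X' b)) ∂ν) := by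
  intro X X' hXX' B _
  have hk : 0 ≤ ε / (2 * Δ) := by positivity
  have hkΔ : ε / (2 * Δ) * Δ = ε / 2 := by field_simp
  have hdensity : ∀ Z Z' : Fin n → 𝒳, hammingDist Z Z' = 1 →
      ∀ᵐ b ∂ν, ENNReal.ofReal (Real.exp (ε / (2 * Δ) * ξ Z b)) ≤
        ENNReal.ofReal (Real.exp (ε / 2)) * ENNReal.ofReal (Real.exp (ε / (2 * Δ) * ξ Z' b)) :=
    fun Z Z' hZZ' ↦ (hsens Z Z' hZZ').mono fun b hb ↦ hkΔ ▸ ofReal_exp_mul_le_of_abs_sub_le hk hb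
  have hexp : ENNReal.ofReal (Real.exp (ε / 2)) * ENNReal.ofReal (Real.exp (ε / 2)) =
      ENNReal.ofReal (Real.exp ε) := by
    rw [← ENNReal.ofReal_mul (Real.exp_pos _).le, ← Real.exp_add, add_halves]
  rw [hc X, hc X', ← hexp]
  exact inv_lintegral_mul_setLIntegral_le (by simpa using Real.exp_pos _) ENNReal.ofReal_ne_top
    (hdensity X X' hXX') (hdensity X' X (hammingDist_comm X' X ▸ hXX')) B

/-- STATEMENT 4 (exponential mechanism): if the objective functions `ξ_X` have finite
sensitivity `Δ_ξ` and the normalizing constants `c_X = ∫ exp((ε/(2Δ_ξ)) ξ_X) dν` are finite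
and strictly positive, then the mechanism with density proportional to
`exp((ε/(2Δ_ξ)) ξ_X)` with respect to ν satisfies ε-differential privacy. -/
theorem stmt_4 {Y 𝒳 : Type*} [MeasurableSpace Y] {n : ℕ} [DecidableEq 𝒳]
    (ν : Measure Y) (ε Δ : ℝ) (hε : 0 < ε) (hΔ : 0 < Δ)
    (ξ : (Fin n → 𝒳) → Y → ℝ) (hmeas : ∀ X, Measurable (ξ X))
    (hsens : ∀ X X' : Fin n → 𝒳, hammingDist X X' = 1 →
      ∀ᵐ b ∂ν, |ξ X b - ξ X' b| ≤ Δ)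
    (c : (Fin n → 𝒳) → ℝ≥0∞)
    (hc : ∀ X, c X = ∫⁻ b, ENNReal.ofReal (Real.exp (ε / (2 * Δ) * ξ X b)) ∂ν)
    (hcfin : ∀ X, c X ≠ ⊤) (hcpos : ∀ X, c X ≠ 0) :
    ∀ X X' : Fin n → 𝒳, hammingDist X X' = 1 →
      ∀ B : Set Y, MeasurableSet B →
        (c X)⁻¹ * ∫⁻ b in B, ENNReal.ofReal (Real.exp (ε / (2 * Δ) * ξ X b)) ∂ν ≤
          ENNReal.ofReal (Real.exp ε) *
            ((c X')⁻¹ * ∫⁻ b in B, ENNReal.ofReal (Real.exp (ε / (2 * Δ) * ξ X' b)) ∂ν) :=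
  stmt_4_general ν ε Δ hε hΔ ξ hsens c hc
end

section
/- (ε-DP of the exponential mechanism for functional PCA on H^k.) Let H be a real separable Hilbert space, let k < n be positive integers, let ε > 0, and let ν be a probability measure on H^k (in the paper, ν is the law of k i.i.d. mean-zero Gaussian processes on H with trace-class covariance operator Σ). For V = (V_1, …, V_k) ∈ H^k, let P_V denote the orthogonal projection of H onto the (finite-dimensional, hence closed) subspace span(V_1, …, V_k). For X ∈ H^n with ‖X_i‖ ≤ 1 for all i, define ξ_X(V) = Σ_{i=1}^n ‖P_V X_i‖², and assume V ↦ ξ_X(V) is ν-measurable for each X. Then the normalizing constant c_X = ∫_{H^k} exp((ε/2) ξ_X(V)) dν(V) satisfies 0 < c_X ≤ exp(εn/2) < ∞, and the family of probability measures μ_X(B) = c_X^{-1} ∫_B exp((ε/2) ξ_X(V)) dν(V), for X ranging over tuples in H^n with all entries of norm at most 1, satisfies ε-differential privacy: μ_X(B) ≤ exp(ε) · μ_{X'}(B) for all measurable B ⊆ H^k whenever X and X' differ in exactly one coordinate. -/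
open MeasureTheory
open scoped ENNReal

/-!
Since `‖P_V x‖ ≤ ‖x‖ ≤ 1`, each summand of the score `ξ_X(V)` lies in `[0, 1]`. Hence
`0 ≤ ξ_X ≤ n`, which bounds the normalizing constant, and changing one entry of `X` moves
`ξ_X` by at most `1` uniformly in `V`. The exponential weights of neighbouring databases are
then within a factor `exp(ε/2)` of each other, so numerator and normalizing constant each
contribute one such factor to the privacy ratio.
-/

/-- The orthogonal projection of a real Hilbert space onto the span of the (finitely many)
vectors `V 0, …, V (k-1)`, viewed as a map `H → H`. -/
noncomputable def projSpan {H : Type*} [NormedAddCommGroup H] [InnerProductSpace ℝ H]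
    [CompleteSpace H] {k : ℕ} (V : Fin k → H) (x : H) : H :=
  haveI : FiniteDimensional ℝ (Submodule.span ℝ (Set.range V)) :=
    FiniteDimensional.span_of_finite ℝ (Set.finite_range V)
  (Submodule.orthogonalProjectionOnto (Submodule.span ℝ (Set.range V)) x : H)

lemma projSpan_norm_le {H : Type*} [NormedAddCommGroup H] [InnerProductSpace ℝ H]
    [CompleteSpace H] {k : ℕ} (V : Fin k → H) (x : H) : ‖projSpan V x‖ ≤ ‖x‖ :=
  haveI : FiniteDimensional ℝ (Submodule.span ℝ (Set.range V)) :=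
    FiniteDimensional.span_of_finite ℝ (Set.finite_range V)
  Submodule.norm_orthogonalProjectionOnto_apply_le _ x

lemma sq_norm_projSpan_le_one {H : Type*} [NormedAddCommGroup H] [InnerProductSpace ℝ H]
    [CompleteSpace H] {k : ℕ} (V : Fin k → H) {x : H} (hx : ‖x‖ ≤ 1) :
    ‖projSpan V x‖ ^ 2 ≤ 1 :=
  pow_le_one₀ (norm_nonneg _) ((projSpan_norm_le V x).trans hx)

lemma abs_sum_sub_sum_le_hammingDist {ι β : Type*} [Fintype ι] [DecidableEq β]
    (φ : β → ℝ) (hφ : ∀ b, 0 ≤ φ b) {x y : ι → β} (hx : ∀ i, φ (x i) ≤ 1)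
    (hy : ∀ i, φ (y i) ≤ 1) :
    |∑ i, φ (x i) - ∑ i, φ (y i)| ≤ hammingDist x y := by
  have hsupp : ∑ i, (φ (x i) - φ (y i)) = ∑ i with x i ≠ y i, (φ (x i) - φ (y i)) := by
    refine (Finset.sum_filter_of_ne fun i _ h => ?_).symm
    exact fun hxy => h (by rw [hxy, sub_self])
  rw [← Finset.sum_sub_distrib, hsupp, hammingDist, ← nsmul_one, ← Finset.sum_const]
  refine (Finset.abs_sum_le_sum_abs _ _).trans (Finset.sum_le_sum fun i _ => ?_)
  exact abs_sub_le_iff.2 ⟨by linarith [hx i, hφ (y i)], by linarith [hy i, hφ (x i)]⟩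

section ExponentialMechanism

variable {α : Type*} [MeasurableSpace α]

lemma one_le_lintegral_ofReal_exp (μ : Measure α) [IsProbabilityMeasure μ] {q : α → ℝ}
    (hq : ∀ a, 0 ≤ q a) : 1 ≤ ∫⁻ a, ENNReal.ofReal (Real.exp (q a)) ∂μ :=
  calc (1 : ℝ≥0∞) = ∫⁻ _, ENNReal.ofReal (Real.exp 0) ∂μ := by simp
    _ ≤ ∫⁻ a, ENNReal.ofReal (Real.exp (q a)) ∂μ :=
      lintegral_mono fun a => ENNReal.ofReal_le_ofReal (Real.exp_le_exp.2 (hq a))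

lemma lintegral_ofReal_exp_le (μ : Measure α) [IsProbabilityMeasure μ] {q : α → ℝ} {M : ℝ}
    (hq : ∀ a, q a ≤ M) : ∫⁻ a, ENNReal.ofReal (Real.exp (q a)) ∂μ ≤ ENNReal.ofReal (Real.exp M) :=
  calc ∫⁻ a, ENNReal.ofReal (Real.exp (q a)) ∂μ ≤ ∫⁻ _, ENNReal.ofReal (Real.exp M) ∂μ :=
        lintegral_mono fun a => ENNReal.ofReal_le_ofReal (Real.exp_le_exp.2 (hq a))
    _ = ENNReal.ofReal (Real.exp M) := by simp

lemma lintegral_ofReal_exp_le_mul_of_le_add (μ : Measure α) {q q' : α → ℝ} {Δ : ℝ}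
    (h : ∀ a, q a ≤ q' a + Δ) :
    ∫⁻ a, ENNReal.ofReal (Real.exp (q a)) ∂μ ≤
      ENNReal.ofReal (Real.exp Δ) * ∫⁻ a, ENNReal.ofReal (Real.exp (q' a)) ∂μ := by
  rw [← lintegral_const_mul' _ _ ENNReal.ofReal_ne_top]
  refine lintegral_mono fun a => ?_
  rw [← ENNReal.ofReal_mul (Real.exp_pos _).le, ← Real.exp_add]
  exact ENNReal.ofReal_le_ofReal (Real.exp_le_exp.2 (by linarith [h a]))

lemma inv_mul_lintegral_ofReal_exp_le (μ : Measure α) (B : Set α) {q q' : α → ℝ} {Δ : ℝ}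
    (h : ∀ a, |q a - q' a| ≤ Δ) :
    (∫⁻ a, ENNReal.ofReal (Real.exp (q a)) ∂μ)⁻¹ *
        ∫⁻ a in B, ENNReal.ofReal (Real.exp (q a)) ∂μ ≤
      ENNReal.ofReal (Real.exp (2 * Δ)) *
        ((∫⁻ a, ENNReal.ofReal (Real.exp (q' a)) ∂μ)⁻¹ *
          ∫⁻ a in B, ENNReal.ofReal (Real.exp (q' a)) ∂μ) := by
  set c := ENNReal.ofReal (Real.exp Δ)
  have hc0 : c ≠ 0 := by simp [c, Real.exp_pos]
  have hctop : c ≠ ⊤ := ENNReal.ofReal_ne_top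
  have hnum := lintegral_ofReal_exp_le_mul_of_le_add (μ.restrict B) (q := q) (q' := q')
    fun a => by linarith [(abs_le.1 (h a)).2]
  have hden := lintegral_ofReal_exp_le_mul_of_le_add μ (q := q') (q' := q)
    fun a => by linarith [(abs_le.1 (h a)).1]
  have hinv : (∫⁻ a, ENNReal.ofReal (Real.exp (q a)) ∂μ)⁻¹ ≤
      c * (∫⁻ a, ENNReal.ofReal (Real.exp (q' a)) ∂μ)⁻¹ :=
    calc _ = c * (c * ∫⁻ a, ENNReal.ofReal (Real.exp (q a)) ∂μ)⁻¹ := by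
          rw [ENNReal.mul_inv (Or.inl hc0) (Or.inl hctop), ← mul_assoc,
            ENNReal.mul_inv_cancel hc0 hctop, one_mul]
      _ ≤ _ := by gcongr
  have hc2 : ENNReal.ofReal (Real.exp (2 * Δ)) = c * c := by
    rw [two_mul, Real.exp_add, ENNReal.ofReal_mul (Real.exp_pos _).le]
  calc _ ≤ c * (∫⁻ a, ENNReal.ofReal (Real.exp (q' a)) ∂μ)⁻¹ *
        (c * ∫⁻ a in B, ENNReal.ofReal (Real.exp (q' a)) ∂μ) := mul_le_mul' hinv hnum
    _ = _ := by rw [hc2]; ring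

end ExponentialMechanism

theorem stmt_11_general {H : Type*} [NormedAddCommGroup H] [InnerProductSpace ℝ H] [CompleteSpace H]
    [DecidableEq H] [MeasurableSpace H]
    {k n : ℕ} (ε : ℝ) (hε : 0 < ε)
    (ν : Measure (Fin k → H)) [IsProbabilityMeasure ν] :
    (∀ X : Fin n → H, (∀ i, ‖X i‖ ≤ 1) →
      0 < ∫⁻ V, ENNReal.ofReal (Real.exp (ε / 2 * ∑ i, ‖projSpan V (X i)‖ ^ 2)) ∂ν ∧
      ∫⁻ V, ENNReal.ofReal (Real.exp (ε / 2 * ∑ i, ‖projSpan V (X i)‖ ^ 2)) ∂ν ≤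
        ENNReal.ofReal (Real.exp (ε * n / 2))) ∧
    (∀ X X' : Fin n → H, (∀ i, ‖X i‖ ≤ 1) → (∀ i, ‖X' i‖ ≤ 1) →
      hammingDist X X' = 1 → ∀ B : Set (Fin k → H), MeasurableSet B →
      (∫⁻ V, ENNReal.ofReal (Real.exp (ε / 2 * ∑ i, ‖projSpan V (X i)‖ ^ 2)) ∂ν)⁻¹ *
          ∫⁻ V in B, ENNReal.ofReal (Real.exp (ε / 2 * ∑ i, ‖projSpan V (X i)‖ ^ 2)) ∂ν ≤
        ENNReal.ofReal (Real.exp ε) *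
          ((∫⁻ V, ENNReal.ofReal (Real.exp (ε / 2 * ∑ i, ‖projSpan V (X' i)‖ ^ 2)) ∂ν)⁻¹ *
            ∫⁻ V in B,
              ENNReal.ofReal (Real.exp (ε / 2 * ∑ i, ‖projSpan V (X' i)‖ ^ 2)) ∂ν)) := by
  have hε2 : 0 ≤ ε / 2 := by positivity
  refine ⟨fun X hX => ⟨zero_lt_one.trans_le ?_, ?_⟩, fun X X' hX hX' hdist B _ => ?_⟩
  · exact one_le_lintegral_ofReal_exp ν fun V =>
      mul_nonneg hε2 (Finset.sum_nonneg fun i _ => sq_nonneg _)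
  · refine lintegral_ofReal_exp_le ν fun V => ?_
    calc ε / 2 * ∑ i, ‖projSpan V (X i)‖ ^ 2 ≤ ε / 2 * ∑ _i : Fin n, 1 :=
          mul_le_mul_of_nonneg_left
            (Finset.sum_le_sum fun i _ => sq_norm_projSpan_le_one V (hX i)) hε2
      _ = ε * n / 2 := by
        rw [Finset.sum_const, Finset.card_univ, Fintype.card_fin, nsmul_one]; ring
  · have hsens : ∀ V : Fin k → H, |ε / 2 * ∑ i, ‖projSpan V (X i)‖ ^ 2 -
        ε / 2 * ∑ i, ‖projSpan V (X' i)‖ ^ 2| ≤ ε / 2 := fun V => by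
      have h := abs_sum_sub_sum_le_hammingDist (fun x => ‖projSpan V x‖ ^ 2)
        (fun _ => sq_nonneg _) (fun i => sq_norm_projSpan_le_one V (hX i))
        (fun i => sq_norm_projSpan_le_one V (hX' i))
      rw [hdist, Nat.cast_one] at h
      rw [← mul_sub, abs_mul, abs_of_nonneg hε2]
      exact mul_le_of_le_one_right hε2 h
    have hdp := inv_mul_lintegral_ofReal_exp_le ν B hsens
    rwa [mul_div_cancel₀ ε two_ne_zero] at hdp

/-- STATEMENT 11 (ε-DP of the exponential mechanism for functional PCA on `H^k`):
with `ξ_X(V) = ∑ᵢ ‖P_V X_i‖²` for databases `X` with entries of norm at most 1, the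
normalizing constants satisfy `0 < c_X ≤ exp(εn/2)`, and the mechanism with density
proportional to `exp((ε/2) ξ_X)` with respect to the base probability measure ν on `H^k`
satisfies ε-differential privacy. -/
theorem stmt_11 {H : Type*} [NormedAddCommGroup H] [InnerProductSpace ℝ H] [CompleteSpace H]
    [TopologicalSpace.SeparableSpace H] [DecidableEq H] [MeasurableSpace H] [BorelSpace H]
    {k n : ℕ} (hk : 0 < k) (hkn : k < n) (ε : ℝ) (hε : 0 < ε)
    (ν : Measure (Fin k → H)) [IsProbabilityMeasure ν]
    (hmeas : ∀ X : Fin n → H,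
      AEMeasurable (fun V : Fin k → H => ∑ i, ‖projSpan V (X i)‖ ^ 2) ν) :
    (∀ X : Fin n → H, (∀ i, ‖X i‖ ≤ 1) →
      0 < ∫⁻ V, ENNReal.ofReal (Real.exp (ε / 2 * ∑ i, ‖projSpan V (X i)‖ ^ 2)) ∂ν ∧
      ∫⁻ V, ENNReal.ofReal (Real.exp (ε / 2 * ∑ i, ‖projSpan V (X i)‖ ^ 2)) ∂ν ≤
        ENNReal.ofReal (Real.exp (ε * n / 2))) ∧
    (∀ X X' : Fin n → H, (∀ i, ‖X i‖ ≤ 1) → (∀ i, ‖X' i‖ ≤ 1) →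
      hammingDist X X' = 1 → ∀ B : Set (Fin k → H), MeasurableSet B →
      (∫⁻ V, ENNReal.ofReal (Real.exp (ε / 2 * ∑ i, ‖projSpan V (X i)‖ ^ 2)) ∂ν)⁻¹ *
          ∫⁻ V in B, ENNReal.ofReal (Real.exp (ε / 2 * ∑ i, ‖projSpan V (X i)‖ ^ 2)) ∂ν ≤
        ENNReal.ofReal (Real.exp ε) *
          ((∫⁻ V, ENNReal.ofReal (Real.exp (ε / 2 * ∑ i, ‖projSpan V (X' i)‖ ^ 2)) ∂ν)⁻¹ *
            ∫⁻ V in B,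
              ENNReal.ofReal (Real.exp (ε / 2 * ∑ i, ‖projSpan V (X' i)‖ ^ 2)) ∂ν)) :=
  stmt_11_general ε hε ν
end
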